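/- arXiv:2408.15081 — 5 statements merged into one kernel-verified Lean document; each statement's English description precedes it below -/
import Mathlib

section
/- Let p>0, α∈(0,2), T>0, σ>0, and let Q̃ be a Borel probability measure on (0,∞). Then for every a>0, the intensity identity underlying the series representation of a one-dimensional proper p-tempered α-stable Lévy process holds: ∫_0^∞ [ ∫_{(0,∞)} ∫_0^∞ ∫_0^1 𝟙{ min( (αs/(σT))^{−1/α} , r^{1/p} u^{1/α} v^{−1/p} ) > a } du · e^{−r} dr · dQ̃(v) ] ds = T · σ ∫_a^∞ q(r^p) r^{−α−1} dr, i.e. the left-hand side equals T·M((a,∞)). -/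
/-!
For fixed `v > 0` the event `a < r^(1/p) u^(1/α) v^(-1/p)` is `{r > θ u}` with
`θ u = (a u^(-1/α))^p v`. Integrating `e^(-r)` over `r` first leaves `∫₀¹ exp(-θ u) du`, and the
substitution `t = a u^(-1/α)` turns this into `α a^α ∫_a^∞ e^(-t^p v) t^(-α-1) dt`. The cap
`(αs/(σT))^(-1/α)` only cuts the `s`-integral off at `s₀ = σT a^(-α)/α`, and `s₀ α a^α = σT`;
exchanging the `v`- and `t`-integrals gives `T M((a,∞))`.
-/

open MeasureTheory Set Real

theorem integral_Ioi_ite_lt_mul_exp_neg {θ : ℝ} (hθ : 0 ≤ θ) :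
    ∫ r in Ioi 0, (if θ < r then (1:ℝ) else 0) * exp (-r) = exp (-θ) := by
  have hind : ∀ r, (if θ < r then (1:ℝ) else 0) * exp (-r)
      = (Ioi θ).indicator (fun r => exp (-r)) r := fun r => by
    simp only [indicator_apply, mem_Ioi, ite_mul, one_mul, zero_mul]
  simp_rw [hind]
  rw [setIntegral_indicator measurableSet_Ioi, Ioi_inter_Ioi, sup_eq_right.2 hθ,
    integral_exp_neg_Ioi]

theorem integral_Ioi_integral_ite_lt_mul_exp_neg {Ω : Type*} [MeasurableSpace Ω]
    (μ : Measure Ω) [IsFiniteMeasure μ] {θ : Ω → ℝ} (hθ : Measurable θ) (hθ0 : ∀ᵐ u ∂μ, 0 ≤ θ u) :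
    ∫ r in Ioi 0, (∫ u, (if θ u < r then (1:ℝ) else 0) ∂μ) * exp (-r) = ∫ u, exp (-θ u) ∂μ := by
  have hint : Integrable (Function.uncurry fun r u => (if θ u < r then (1:ℝ) else 0) * exp (-r))
      ((volume.restrict (Ioi 0)).prod μ) := by
    refine Integrable.mono' ((exp_neg_integrableOn_Ioi 0 one_pos).mul_prod
      (integrable_const (1:ℝ))) ?_ (ae_of_all _ fun z => ?_)
    · have hlt : MeasurableSet {z : ℝ × Ω | θ z.2 < z.1} :=
        measurableSet_lt (hθ.comp measurable_snd) measurable_fst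
      exact ((Measurable.ite hlt measurable_const measurable_const).mul
        (measurable_fst.neg.exp)).aestronglyMeasurable
    · obtain ⟨r, u⟩ := z
      rw [Function.uncurry_apply_pair, norm_mul, norm_of_nonneg (exp_pos _).le, neg_one_mul]
      split_ifs <;> simp [(exp_pos _).le]
  simp_rw [← integral_mul_const]
  rw [integral_integral_swap hint]
  refine integral_congr_ae ?_
  filter_upwards [hθ0] with u hu
  exact integral_Ioi_ite_lt_mul_exp_neg hu

theorem image_Ioi_mul_rpow_neg {a α : ℝ} (ha : 0 < a) (hα : 0 < α) :
    (fun t : ℝ => a ^ α * t ^ (-α)) '' Ioi a = Ioo 0 1 := by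
  ext y
  constructor
  · rintro ⟨t, ht, rfl⟩
    have ht0 : 0 < t := ha.trans ht
    refine ⟨by positivity, ?_⟩
    dsimp only
    rw [rpow_neg ht0.le, ← div_eq_mul_inv, div_lt_one (by positivity)]
    exact rpow_lt_rpow ha.le ht hα
  · rintro ⟨hy0, hy1⟩
    refine ⟨a * y ^ (-1 / α), ?_, ?_⟩
    · exact lt_mul_of_one_lt_right ha (one_lt_rpow_of_pos_of_lt_one_of_neg hy0 hy1 (by
        rw [neg_div]; exact neg_neg_iff_pos.2 (by positivity)))
    · dsimp only
      rw [mul_rpow ha.le (by positivity), ← rpow_mul hy0.le, ← mul_assoc, ← rpow_add ha,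
        show -1 / α * -α = 1 by field_simp]
      simp

theorem integral_Ioo_zero_one_comp_mul_rpow {E : Type*} [NormedAddCommGroup E] [NormedSpace ℝ E]
    (f : ℝ → E) {a α : ℝ} (ha : 0 < a) (hα : 0 < α) :
    ∫ u in Ioo 0 1, f (a * u ^ (-1 / α)) = (α * a ^ α) • ∫ t in Ioi a, t ^ (-α - 1) • f t := by
  have hderiv : ∀ t ∈ Ioi a, HasDerivWithinAt (fun t : ℝ => a ^ α * t ^ (-α))
      (a ^ α * (-α * t ^ (-α - 1))) (Ioi a) t := fun t ht =>
    ((hasDerivAt_rpow_const (Or.inl (ha.trans ht).ne')).const_mul _).hasDerivWithinAt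
  have hinj : InjOn (fun t : ℝ => a ^ α * t ^ (-α)) (Ioi a) := fun x hx y hy hxy =>
    rpow_left_injOn (neg_ne_zero.2 hα.ne') (ha.trans hx).le (ha.trans hy).le
      (mul_left_cancel₀ (by positivity) hxy)
  rw [← image_Ioi_mul_rpow_neg ha hα,
    integral_image_eq_integral_abs_deriv_smul measurableSet_Ioi hderiv hinj, ← integral_smul]
  refine setIntegral_congr_fun measurableSet_Ioi fun t ht => ?_
  have ht0 : 0 < t := ha.trans ht
  have hinv : a * (a ^ α * t ^ (-α)) ^ (-1 / α) = t := by
    rw [mul_rpow (by positivity) (by positivity), ← rpow_mul ha.le, ← rpow_mul ht0.le,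
      show α * (-1 / α) = -1 by field_simp, show -α * (-1 / α) = 1 by field_simp,
      rpow_neg_one, rpow_one, ← mul_assoc, mul_inv_cancel₀ ha.ne', one_mul]
  have hneg : a ^ α * (-α * t ^ (-α - 1)) < 0 :=
    mul_neg_of_pos_of_neg (by positivity)
      (mul_neg_of_neg_of_pos (neg_neg_iff_pos.2 hα) (by positivity))
  rw [hinv, smul_smul, abs_of_neg hneg]
  congr 1
  ring

theorem lt_rpow_mul_rpow_mul_rpow_iff {p α a r u v : ℝ} (hp : 0 < p) (ha : 0 ≤ a) (hr : 0 < r)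
    (hu : 0 < u) (hv : 0 < v) :
    a < r ^ (1 / p) * u ^ (1 / α) * v ^ (-1 / p) ↔ (a * u ^ (-1 / α)) ^ p * v < r := by
  rw [← rpow_lt_rpow_iff (by positivity) hr.le (one_div_pos.2 hp),
    mul_rpow (by positivity) hv.le, ← rpow_mul (by positivity), mul_one_div_cancel hp.ne', rpow_one,
    neg_div, neg_div, rpow_neg hu.le, rpow_neg hv.le, ← div_eq_mul_inv, ← div_eq_mul_inv,
    div_mul_eq_mul_div, div_lt_iff₀ (by positivity), lt_div_iff₀ (by positivity)]

theorem integral_Ioi_integral_Ioo_ite_lt_mul_exp_neg {p α a v : ℝ} (hp : 0 < p) (hα : 0 < α)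
    (ha : 0 < a) (hv : 0 < v) :
    ∫ r in Ioi 0, (∫ u in Ioo 0 1,
        if a < r ^ (1 / p) * u ^ (1 / α) * v ^ (-1 / p) then (1:ℝ) else 0) * exp (-r)
      = α * a ^ α * ∫ t in Ioi a, exp (-(t ^ p) * v) * t ^ (-α - 1) := by
  have hcond : ∀ r ∈ Ioi (0:ℝ),
      (∫ u in Ioo 0 1, if a < r ^ (1 / p) * u ^ (1 / α) * v ^ (-1 / p) then (1:ℝ) else 0)
        * exp (-r)
      = (∫ u in Ioo 0 1, if (a * u ^ (-1 / α)) ^ p * v < r then (1:ℝ) else 0) * exp (-r) :=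
    fun r hr => congrArg (· * exp (-r)) (setIntegral_congr_fun measurableSet_Ioo fun u hu =>
      if_congr (lt_rpow_mul_rpow_mul_rpow_iff hp ha.le hr hu.1 hv) rfl rfl)
  have : IsFiniteMeasure (volume.restrict (Ioo (0:ℝ) 1)) :=
    isFiniteMeasure_restrict.2 measure_Ioo_lt_top.ne
  rw [setIntegral_congr_fun measurableSet_Ioi hcond,
    integral_Ioi_integral_ite_lt_mul_exp_neg _ (by fun_prop)
      ((ae_restrict_mem measurableSet_Ioo).mono fun u hu => by have := hu.1; positivity)]
  simpa only [neg_mul, smul_eq_mul, mul_comm _ (exp _), ← integral_const_mul] using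
    integral_Ioo_zero_one_comp_mul_rpow (fun t => exp (-(t ^ p) * v)) ha hα

theorem lt_mul_div_rpow_neg_one_div_iff {α c a s : ℝ} (hα : 0 < α) (hc : 0 < c) (ha : 0 < a)
    (hs : 0 < s) :
    a < (α * s / c) ^ (-1 / α) ↔ s < c * a ^ (-α) / α := by
  conv_lhs => rw [← rpow_rpow_inv ha.le (neg_ne_zero.2 hα.ne')]
  rw [inv_neg, neg_div, one_div, rpow_lt_rpow_iff_of_neg (by positivity) (by positivity)
    (by simpa using hα), div_lt_iff₀ hc, lt_div_iff₀ hα, mul_comm s, mul_comm c]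

theorem integral_Ioi_ite_lt_mul_div_rpow_neg_one_div {α c a : ℝ} (hα : 0 < α) (hc : 0 < c)
    (ha : 0 < a) (K : ℝ) :
    ∫ s in Ioi 0, (if a < (α * s / c) ^ (-1 / α) then K else 0) = c * a ^ (-α) / α * K := by
  have hind : ∀ s ∈ Ioi (0:ℝ), (if a < (α * s / c) ^ (-1 / α) then K else 0)
      = (Iio (c * a ^ (-α) / α)).indicator (fun _ => K) s := fun s hs => by
    simp only [indicator_apply, mem_Iio, lt_mul_div_rpow_neg_one_div_iff hα hc ha hs]
  rw [setIntegral_congr_fun measurableSet_Ioi hind, setIntegral_indicator measurableSet_Iio,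
    Ioi_inter_Iio, setIntegral_const, volume_real_Ioo_of_le (by positivity), sub_zero, smul_eq_mul]

theorem integral_Ioi_integral_exp_neg_rpow_mul_swap {p α a : ℝ} (hα : 0 < α) (ha : 0 < a)
    (Q : Measure ℝ) [IsFiniteMeasure Q] (hQ : ∀ᵐ w ∂Q, 0 ≤ w) :
    ∫ r in Ioi a, (∫ w, exp (-(r ^ p) * w) ∂Q) * r ^ (-α - 1)
      = ∫ w, (∫ r in Ioi a, exp (-(r ^ p) * w) * r ^ (-α - 1)) ∂Q := by
  have hint : Integrable (Function.uncurry fun r w => exp (-(r ^ p) * w) * r ^ (-α - 1))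
      ((volume.restrict (Ioi a)).prod Q) := by
    refine Integrable.mono' ((integrableOn_Ioi_rpow_of_lt (show -α - 1 < -1 by linarith)
      ha).mul_prod (integrable_const (1:ℝ))) (by fun_prop) ?_
    have hr : ∀ᵐ z ∂((volume.restrict (Ioi a)).prod Q), z.1 ∈ Ioi a :=
      Measure.quasiMeasurePreserving_fst.ae (ae_restrict_mem measurableSet_Ioi)
    have hw : ∀ᵐ z ∂((volume.restrict (Ioi a)).prod Q), 0 ≤ z.2 :=
      Measure.quasiMeasurePreserving_snd.ae hQ
    filter_upwards [hr, hw] with ⟨r, w⟩ hr hw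
    have hr0 : 0 < r := ha.trans hr
    rw [Function.uncurry_apply_pair, norm_mul, norm_of_nonneg (exp_pos _).le,
      norm_of_nonneg (by positivity), mul_one, mul_comm]
    exact mul_le_of_le_one_right (by positivity)
      (exp_le_one_iff.2 (mul_nonpos_of_nonpos_of_nonneg (neg_nonpos.2 (by positivity)) hw))
  simp_rw [← integral_mul_const]
  exact integral_integral_swap hint

/-- Intensity identity underlying the series representation of a
one-dimensional proper `p`-tempered `α`-stable Lévy process: for every `a > 0`,
`∫_0^∞ ∫_{(0,∞)} ∫_0^∞ ∫_0^1 𝟙{min((αs/(σT))^{−1/α}, r^{1/p} u^{1/α} v^{−1/p}) > a}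
  du · e^{−r} dr dQ̃(v) ds = T · σ ∫_a^∞ q(r^p) r^{−α−1} dr`,
where `q(x) = ∫ e^{−xw} dQ̃(w)` and `Q̃` is a Borel probability measure on `(0,∞)`. -/
theorem series_intensity_identity (p α T σ a : ℝ) (hp : 0 < p) (hα : α ∈ Set.Ioo (0:ℝ) 2)
    (hT : 0 < T) (hσ : 0 < σ) (ha : 0 < a)
    (Q : Measure ℝ) [IsProbabilityMeasure Q] (hQ : Q (Set.Iic 0) = 0) :
    (∫ s in Set.Ioi (0:ℝ),
      ∫ v, (∫ r in Set.Ioi (0:ℝ),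
        (∫ u in Set.Ioo (0:ℝ) 1,
          if a < min ((α * s / (σ * T)) ^ (-1 / α)) (r ^ (1 / p) * u ^ (1 / α) * v ^ (-1 / p))
          then (1:ℝ) else 0) * Real.exp (-r)) ∂Q) =
      T * (σ * ∫ r in Set.Ioi a, (∫ w, Real.exp (-(r ^ p) * w) ∂Q) * r ^ (-α - 1)) := by
  obtain ⟨hα0, -⟩ := hα
  have hQpos : ∀ᵐ v ∂Q, 0 < v := by
    simp only [ae_iff, not_lt]
    exact hQ
  set K := ∫ v, (∫ r in Ioi 0, (∫ u in Ioo 0 1,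
    if a < r ^ (1 / p) * u ^ (1 / α) * v ^ (-1 / p) then (1:ℝ) else 0) * exp (-r)) ∂Q
  have hsplit : ∀ s ∈ Ioi (0:ℝ), ∫ v, (∫ r in Ioi 0, (∫ u in Ioo 0 1,
      if a < min ((α * s / (σ * T)) ^ (-1 / α)) (r ^ (1 / p) * u ^ (1 / α) * v ^ (-1 / p))
      then (1:ℝ) else 0) * exp (-r)) ∂Q
      = if a < (α * s / (σ * T)) ^ (-1 / α) then K else 0 := fun s _ => by
    split_ifs with h <;> simp [h, K]
  have hK : K = α * a ^ α * ∫ w, (∫ r in Ioi a, exp (-(r ^ p) * w) * r ^ (-α - 1)) ∂Q := by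
    rw [← integral_const_mul]
    exact integral_congr_ae (hQpos.mono fun v hv =>
      integral_Ioi_integral_Ioo_ite_lt_mul_exp_neg hp hα0 ha hv)
  rw [setIntegral_congr_fun measurableSet_Ioi hsplit,
    integral_Ioi_ite_lt_mul_div_rpow_neg_one_div hα0 (by positivity) ha, hK,
    integral_Ioi_integral_exp_neg_rpow_mul_swap hα0 ha Q (hQpos.mono fun _ hv => hv.le),
    rpow_neg ha.le]
  field_simp
end

section
/- Let p>0, α∈(0,2), σ>0, n>0, and let Q̃ be a Borel probability measure on (0,∞). Then for every x>0, the truncated series representation has jump-size intensity ∫_{(0,∞)} ∫_0^∞ ∫_0^1 ∫_0^n 𝟙{ min( (αs/σ)^{−1/α} , r^{1/p} u^{1/α} v^{−1/p} ) > x } ds · du · e^{−r} dr · dQ̃(v) = min( n α x^{α}/σ , 1 ) · σ ∫_x^∞ q(r^p) r^{−α−1} dr; that is, the truncated Lévy measure satisfies M_n((x,∞)) = min(nαx^α/σ, 1) · M((x,∞)). -/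
/-!
The `s`-integral only sees the first term of the minimum through the length
`min n (σ / (α x^α))` of the set where it exceeds `x`, so this factor splits off, and the
`u`-integral is `(1 - (x (v/r)^{1/p})^α)⁺`. The substitution `r = v s^p` turns the
`r`-integral into `∫_x^∞ (1 - (x/s)^α) (-dF(s))` for the Weibull survival function
`F(s) = exp (-v s^p)`, and integration by parts makes it `α x^α ∫_x^∞ F(s) s^{-α-1} ds`.
Integrating over `v ∼ Q̃` and exchanging the integrals (the integrand is dominated by
`s^{-α-1}`) produces `q(s^p)`.
-/

open MeasureTheory Set Real Filter Topology

theorem setIntegral_Ioo_ite_lt (a b c : ℝ) :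
    ∫ s in Ioo a b, (if s < c then (1 : ℝ) else 0) = max (min b c - a) 0 := by
  have h : (fun s : ℝ => if s < c then (1 : ℝ) else 0) = (Iio c).indicator 1 := by
    ext s; simp [indicator_apply]
  rw [h, integral_indicator_one measurableSet_Iio, measureReal_restrict_apply measurableSet_Iio,
    inter_comm, Ioo_inter_Iio, Real.volume_real_Ioo]

theorem setIntegral_Ioo_ite_gt (a b c : ℝ) :
    ∫ u in Ioo a b, (if c < u then (1 : ℝ) else 0) = max (b - max a c) 0 := by
  have h : (fun u : ℝ => if c < u then (1 : ℝ) else 0) = (Ioi c).indicator 1 := by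
    ext u; simp [indicator_apply]
  rw [h, integral_indicator_one measurableSet_Ioi, measureReal_restrict_apply measurableSet_Ioi,
    inter_comm, Ioo_inter_Ioi, Real.volume_real_Ioo]

theorem lt_rpow_neg_one_div_iff {α σ x s : ℝ} (hα : 0 < α) (hσ : 0 < σ) (hx : 0 < x)
    (hs : 0 < s) : x < (α * s / σ) ^ (-1 / α) ↔ s < σ / (α * x ^ α) := by
  rw [neg_div, one_div, ← inv_neg, lt_rpow_inv_iff_of_neg hx (by positivity) (neg_lt_zero.2 hα),
    rpow_neg hx.le, lt_div_iff₀ (by positivity), div_lt_iff₀ hσ, inv_mul_eq_div,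
    lt_div_iff₀ (by positivity), mul_comm s, mul_right_comm]

theorem lt_mul_rpow_one_div_iff {α x K u : ℝ} (hα : 0 < α) (hx : 0 < x) (hK : 0 < K)
    (hu : 0 ≤ u) : x < K * u ^ (1 / α) ↔ (x / K) ^ α < u := by
  rw [← div_lt_iff₀' hK, one_div, lt_rpow_inv_iff_of_pos (by positivity) hu hα]

theorem setIntegral_Ioo_ite_lt_min_rpow {α σ n x : ℝ} (hα : 0 < α) (hσ : 0 < σ) (hn : 0 < n)
    (hx : 0 < x) (C : ℝ) :
    ∫ s in Ioo 0 n, (if x < min ((α * s / σ) ^ (-1 / α)) C then (1 : ℝ) else 0)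
      = min n (σ / (α * x ^ α)) * (if x < C then 1 else 0) := by
  by_cases hC : x < C
  · have hcongr : ∀ s ∈ Ioo 0 n,
        (if x < min ((α * s / σ) ^ (-1 / α)) C then (1 : ℝ) else 0)
          = if s < σ / (α * x ^ α) then 1 else 0 := fun s hs => by
      simp only [lt_min_iff, hC, and_true, lt_rpow_neg_one_div_iff hα hσ hx hs.1]
    rw [setIntegral_congr_fun measurableSet_Ioo hcongr, setIntegral_Ioo_ite_lt, if_pos hC,
      mul_one, sub_zero, max_eq_left (le_min hn.le (by positivity))]
  · simp [hC]

theorem setIntegral_Ioo_ite_lt_mul_rpow {α x K : ℝ} (hα : 0 < α) (hx : 0 < x) (hK : 0 < K) :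
    ∫ u in Ioo 0 1, (if x < K * u ^ (1 / α) then (1 : ℝ) else 0)
      = max (1 - (x / K) ^ α) 0 := by
  have hcongr : ∀ u ∈ Ioo (0 : ℝ) 1, (if x < K * u ^ (1 / α) then (1 : ℝ) else 0)
      = if (x / K) ^ α < u then 1 else 0 := fun u hu => by
    simp only [lt_mul_rpow_one_div_iff hα hx hK hu.1.le]
  rw [setIntegral_congr_fun measurableSet_Ioo hcongr, setIntegral_Ioo_ite_gt,
    max_eq_right (by positivity : (0 : ℝ) ≤ (x / K) ^ α)]

theorem integral_Ioo_Ioo_ite_lt_min {p α σ n x r v : ℝ} (hα : 0 < α) (hσ : 0 < σ)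
    (hn : 0 < n) (hx : 0 < x) (hr : 0 < r) (hv : 0 < v) :
    ∫ u in Ioo 0 1, ∫ s in Ioo 0 n,
        (if x < min ((α * s / σ) ^ (-1 / α)) (r ^ (1 / p) * u ^ (1 / α) * v ^ (-1 / p))
        then (1 : ℝ) else 0)
      = min n (σ / (α * x ^ α)) * max (1 - (x / (r ^ (1 / p) * v ^ (-1 / p))) ^ α) 0 := by
  simp_rw [setIntegral_Ioo_ite_lt_min_rpow hα hσ hn hx, integral_const_mul,
    mul_right_comm _ (_ ^ (1 / α))]
  rw [setIntegral_Ioo_ite_lt_mul_rpow hα hx (by positivity)]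

theorem integral_Ioi_eq_integral_comp_mul_rpow {p v : ℝ} (hp : 0 < p) (hv : 0 < v)
    (g : ℝ → ℝ) : ∫ r in Ioi 0, g r = ∫ s in Ioi 0, v * p * s ^ (p - 1) * g (v * s ^ p) := by
  have h := integral_comp_rpow_Ioi_of_pos (g := fun t => g (v * t)) hp
  simp only [integral_comp_mul_left_Ioi g 0 hv, mul_zero, smul_eq_mul] at h
  simp_rw [mul_assoc v, integral_const_mul, h, ← mul_assoc, mul_inv_cancel₀ hv.ne', one_mul]

theorem hasDerivAt_exp_neg_rpow_mul {p v s : ℝ} (hs : s ≠ 0) :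
    HasDerivAt (fun s => exp (-s ^ p * v)) (-(v * p * s ^ (p - 1) * exp (-s ^ p * v))) s := by
  refine (((hasDerivAt_rpow_const (p := p) (Or.inl hs)).neg.mul_const v).exp).congr_deriv ?_
  simp only [Pi.neg_apply]
  ring

theorem tendsto_exp_neg_rpow_mul_atTop {p v : ℝ} (hp : 0 < p) (hv : 0 < v) :
    Tendsto (fun s => exp (-s ^ p * v)) atTop (𝓝 0) :=
  tendsto_exp_atBot.comp <|
    (tendsto_neg_atTop_atBot.comp (tendsto_rpow_atTop hp)).atBot_mul_const hv

theorem antitoneOn_Ici_of_hasDerivAt_neg {x : ℝ} {F f : ℝ → ℝ}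
    (hF : ∀ s ∈ Ici x, HasDerivAt F (-f s) s) (hf : ∀ s ∈ Ioi x, 0 ≤ f s) :
    AntitoneOn F (Ici x) := by
  refine antitoneOn_of_deriv_nonpos (convex_Ici x)
    (fun s hs => (hF s hs).continuousAt.continuousWithinAt) (fun s hs => ?_) (fun s hs => ?_)
  all_goals rw [interior_Ici] at hs
  · exact (hF s (Ioi_subset_Ici_self hs)).differentiableAt.differentiableWithinAt
  · rw [(hF s (Ioi_subset_Ici_self hs)).deriv, neg_nonpos]
    exact hf s hs

theorem norm_le_of_antitoneOn_Ici_of_tendsto_zero {x : ℝ} {F : ℝ → ℝ}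
    (hF : AntitoneOn F (Ici x)) (hF_lim : Tendsto F atTop (𝓝 0)) :
    ∀ s ∈ Ici x, ‖F s‖ ≤ F x := by
  intro s hs
  have hF_nonneg : 0 ≤ F s := le_of_tendsto hF_lim <| eventually_atTop.2
    ⟨s, fun t ht => hF hs (mem_Ici.2 (le_trans hs ht)) ht⟩
  rw [norm_of_nonneg hF_nonneg]
  exact hF self_mem_Ici hs hs

theorem hasDerivAt_one_sub_mul_rpow_neg {a c s : ℝ} (hs : s ≠ 0) :
    HasDerivAt (fun s => 1 - c * s ^ (-a)) (a * c * s ^ (-a - 1)) s :=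
  (((hasDerivAt_rpow_const (p := -a) (Or.inl hs)).const_mul c).const_sub 1).congr_deriv
    (by ring)

theorem one_sub_div_rpow_mem_Icc {a x s : ℝ} (ha : 0 ≤ a) (hx : 0 ≤ x) (hxs : x ≤ s)
    (hs : 0 < s) : 1 - (x / s) ^ a ∈ Icc 0 1 := by
  have h0 : 0 ≤ (x / s) ^ a := by positivity
  have h1 : (x / s) ^ a ≤ 1 := rpow_le_one (by positivity) ((div_le_one hs).2 hxs) ha
  constructor <;> linarith

theorem integral_Ioi_mul_eq_integral_deriv_mul {x C : ℝ} {u u' F f : ℝ → ℝ}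
    (hu : ∀ s ∈ Ici x, HasDerivAt u (u' s) s) (hux : u x = 0)
    (hu_bound : ∀ s ∈ Ioi x, ‖u s‖ ≤ C) (hu' : IntegrableOn u' (Ioi x))
    (hF : ∀ s ∈ Ici x, HasDerivAt F (-f s) s) (hf : ∀ s ∈ Ioi x, 0 ≤ f s)
    (hF_lim : Tendsto F atTop (𝓝 0)) :
    ∫ s in Ioi x, u s * f s = ∫ s in Ioi x, u' s * F s := by
  have hF_bound := norm_le_of_antitoneOn_Ici_of_tendsto_zero
    (antitoneOn_Ici_of_hasDerivAt_neg hF hf) hF_lim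
  have hf_int : IntegrableOn f (Ioi x) :=
    integrableOn_Ioi_deriv_of_nonneg (g := -F) (l := -0)
      (hF x self_mem_Ici).neg.continuousAt.continuousWithinAt
      (fun s hs => by simpa using (hF s (Ioi_subset_Ici_self hs)).neg) hf hF_lim.neg
  have hu_cont : ContinuousOn u (Ioi x) := fun s hs =>
    (hu s (Ioi_subset_Ici_self hs)).continuousAt.continuousWithinAt
  have hF_cont : ContinuousOn F (Ioi x) := fun s hs =>
    (hF s (Ioi_subset_Ici_self hs)).continuousAt.continuousWithinAt
  have huF_zero : Tendsto (u * F) (𝓝[>] x) (𝓝 0) := by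
    have h := ((hu x self_mem_Ici).continuousAt.mul
      (hF x self_mem_Ici).continuousAt).tendsto.mono_left (nhdsWithin_le_nhds (s := Ioi x))
    rwa [Pi.mul_apply, hux, zero_mul] at h
  have huF_infty : Tendsto (u * F) atTop (𝓝 0) :=
    isBoundedUnder_le_mul_tendsto_zero
      (isBoundedUnder_of_eventually_le ((eventually_gt_atTop x).mono hu_bound)) hF_lim
  have hparts := integral_Ioi_mul_deriv_eq_deriv_mul
    (fun s hs => hu s (Ioi_subset_Ici_self hs)) (fun s hs => hF s (Ioi_subset_Ici_self hs))
    (hf_int.neg.bdd_mul (c := C) (hu_cont.aestronglyMeasurable measurableSet_Ioi)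
      ((ae_restrict_iff' measurableSet_Ioi).2 (Eventually.of_forall hu_bound)))
    (hu'.mul_bdd (c := F x) (hF_cont.aestronglyMeasurable measurableSet_Ioi)
      ((ae_restrict_iff' measurableSet_Ioi).2
        (Eventually.of_forall fun s hs => hF_bound s (Ioi_subset_Ici_self hs))))
    huF_zero huF_infty
  simp only [mul_neg, integral_neg, sub_zero, zero_sub, neg_inj] at hparts
  exact hparts

theorem integral_Ioi_one_sub_div_rpow_mul {a x : ℝ} (ha : 0 < a) (hx : 0 < x) {F f : ℝ → ℝ}
    (hF : ∀ s ∈ Ici x, HasDerivAt F (-f s) s) (hf : ∀ s ∈ Ioi x, 0 ≤ f s)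
    (hF_lim : Tendsto F atTop (𝓝 0)) :
    ∫ s in Ioi x, (1 - (x / s) ^ a) * f s = a * x ^ a * ∫ s in Ioi x, F s * s ^ (-a - 1) := by
  have hu : ∀ s ∈ Ioi x, 1 - (x / s) ^ a = 1 - x ^ a * s ^ (-a) := fun s hs => by
    rw [div_rpow hx.le (hx.trans hs).le, div_eq_mul_inv, ← rpow_neg (hx.trans hs).le]
  have hu_bound : ∀ s ∈ Ioi x, ‖1 - x ^ a * s ^ (-a)‖ ≤ 1 := fun s hs => by
    obtain ⟨h0, h1⟩ := one_sub_div_rpow_mem_Icc ha.le hx.le hs.le (hx.trans hs)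
    rw [← hu s hs, Real.norm_eq_abs, abs_le]
    constructor <;> linarith
  rw [setIntegral_congr_fun measurableSet_Ioi fun s hs => by rw [hu s hs],
    integral_Ioi_mul_eq_integral_deriv_mul
      (fun s hs => hasDerivAt_one_sub_mul_rpow_neg (hx.trans_le hs).ne')
      (by simp [← rpow_add hx]) hu_bound
      ((integrableOn_Ioi_rpow_of_lt (by linarith : -a - 1 < -1) hx).const_mul (a * x ^ a))
      hF hf hF_lim, ← integral_const_mul]
  exact setIntegral_congr_fun measurableSet_Ioi fun s _ => by ring

theorem integral_Ioi_max_one_sub_rpow_mul_exp {p v a x : ℝ} (hp : 0 < p) (hv : 0 < v)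
    (ha : 0 < a) (hx : 0 < x) :
    ∫ r in Ioi 0, max (1 - (x / (r ^ (1 / p) * v ^ (-1 / p))) ^ a) 0 * exp (-r)
      = a * x ^ a * ∫ s in Ioi x, exp (-s ^ p * v) * s ^ (-a - 1) := by
  have hweight : ∀ s ∈ Ioi (0 : ℝ),
      v * p * s ^ (p - 1) * (max (1 - (x / ((v * s ^ p) ^ (1 / p) * v ^ (-1 / p))) ^ a) 0
        * exp (-(v * s ^ p)))
      = (Ioi x).indicator
          (fun s => (1 - (x / s) ^ a) * (v * p * s ^ (p - 1) * exp (-s ^ p * v))) s := by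
    intro s (hs : 0 < s)
    have hroot : (v * s ^ p) ^ (1 / p) * v ^ (-1 / p) = s := by
      rw [mul_rpow hv.le (rpow_nonneg hs.le p), ← rpow_mul hs.le, mul_one_div_cancel hp.ne',
        rpow_one, mul_right_comm, ← rpow_add hv, neg_div, add_neg_cancel, rpow_zero, one_mul]
    rw [hroot, show -(v * s ^ p) = -s ^ p * v by ring]
    by_cases hxs : x < s
    · rw [indicator_of_mem (mem_Ioi.2 hxs), max_eq_left]
      · ring
      · exact (one_sub_div_rpow_mem_Icc ha.le hx.le hxs.le hs).1
    · rw [indicator_of_notMem (notMem_Ioi.2 (not_lt.1 hxs)), max_eq_right, zero_mul, mul_zero]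
      exact sub_nonpos.2 (one_le_rpow ((one_le_div hs).2 (not_lt.1 hxs)) ha.le)
  calc ∫ r in Ioi 0, max (1 - (x / (r ^ (1 / p) * v ^ (-1 / p))) ^ a) 0 * exp (-r)
      = ∫ s in Ioi 0, (Ioi x).indicator
          (fun s => (1 - (x / s) ^ a) * (v * p * s ^ (p - 1) * exp (-s ^ p * v))) s := by
        rw [integral_Ioi_eq_integral_comp_mul_rpow hp hv]
        exact setIntegral_congr_fun measurableSet_Ioi hweight
    _ = ∫ s in Ioi x, (1 - (x / s) ^ a) * (v * p * s ^ (p - 1) * exp (-s ^ p * v)) := by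
        rw [setIntegral_indicator measurableSet_Ioi, Ioi_inter_Ioi, max_eq_right hx.le]
    _ = a * x ^ a * ∫ s in Ioi x, exp (-s ^ p * v) * s ^ (-a - 1) :=
        integral_Ioi_one_sub_div_rpow_mul ha hx
          (fun s hs => hasDerivAt_exp_neg_rpow_mul (hx.trans_le hs).ne')
          (fun s hs => by have := hx.trans hs; positivity)
          (tendsto_exp_neg_rpow_mul_atTop hp hv)

theorem integral_integral_exp_neg_rpow_mul_swap {Q : Measure ℝ} [IsFiniteMeasure Q]
    (hQ : ∀ᵐ w ∂Q, 0 ≤ w) {p x : ℝ} (hx : 0 ≤ x) {g : ℝ → ℝ} (hg : IntegrableOn g (Ioi x)) :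
    ∫ w, (∫ s in Ioi x, exp (-s ^ p * w) * g s) ∂Q
      = ∫ s in Ioi x, (∫ w, exp (-s ^ p * w) ∂Q) * g s := by
  -- restricting `Q` to `[0, ∞)` keeps the exponential factor below `1`
  have hQ_restrict : Q.restrict (Ici 0) = Q := Measure.restrict_eq_self_of_ae_mem hQ
  have hint : Integrable (Function.uncurry fun w s => exp (-s ^ p * w) * g s)
      ((Q.restrict (Ici 0)).prod (volume.restrict (Ioi x))) := by
    refine (hg.norm.comp_snd _).mono' ?_ ?_
    · have hexp : Measurable fun z : ℝ × ℝ => exp (-z.2 ^ p * z.1) := by fun_prop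
      exact hexp.aestronglyMeasurable.mul hg.aestronglyMeasurable.comp_snd
    · rw [Measure.prod_restrict]
      filter_upwards [ae_restrict_mem (measurableSet_Ici.prod measurableSet_Ioi)]
        with ⟨w, s⟩ ⟨hw, hs⟩
      have hexp : exp (-s ^ p * w) ≤ 1 := exp_le_one_iff.2 <| mul_nonpos_of_nonpos_of_nonneg
        (neg_nonpos.2 (rpow_nonneg (hx.trans (le_of_lt hs)) p)) hw
      simp only [Function.uncurry_apply_pair, norm_mul, norm_of_nonneg (exp_pos _).le]
      exact mul_le_of_le_one_left (norm_nonneg _) hexp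
  rw [← hQ_restrict, integral_integral_swap hint]
  simp_rw [integral_mul_const]

theorem min_div_mul_eq_min_mul_div_mul {n c σ : ℝ} (hc : 0 < c) (hσ : 0 < σ) :
    min n (σ / c) * c = min (n * c / σ) 1 * σ := by
  rw [min_mul_of_nonneg _ _ hc.le, min_mul_of_nonneg _ _ hσ.le, div_mul_cancel₀ _ hc.ne',
    div_mul_cancel₀ _ hσ.ne', one_mul]

/-- Truncated jump-size intensity of the series representation: for
`p>0`, `α ∈ (0,2)`, `σ>0`, `n>0`, a Borel probability measure `Q̃` on `(0,∞)`, and `x>0`,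
`∫_{(0,∞)} ∫_0^∞ ∫_0^1 ∫_0^n 𝟙{min((αs/σ)^{−1/α}, r^{1/p} u^{1/α} v^{−1/p}) > x} ds du
  e^{−r} dr dQ̃(v) = min(nαx^α/σ, 1) · σ ∫_x^∞ q(r^p) r^{−α−1} dr`,
where `q(x) = ∫ e^{−xw} dQ̃(w)`; i.e. `M_n((x,∞)) = min(nαx^α/σ, 1) · M((x,∞))`. -/
theorem truncated_series_intensity (p α σ n x : ℝ) (hp : 0 < p) (hα : α ∈ Set.Ioo (0:ℝ) 2)
    (hσ : 0 < σ) (hn : 0 < n) (hx : 0 < x)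
    (Q : Measure ℝ) [IsProbabilityMeasure Q] (hQ : Q (Set.Iic 0) = 0) :
    (∫ v, (∫ r in Set.Ioi (0:ℝ),
        (∫ u in Set.Ioo (0:ℝ) 1,
          ∫ s in Set.Ioo (0:ℝ) n,
            if x < min ((α * s / σ) ^ (-1 / α)) (r ^ (1 / p) * u ^ (1 / α) * v ^ (-1 / p))
            then (1:ℝ) else 0) * Real.exp (-r)) ∂Q) =
      min (n * α * x ^ α / σ) 1 *
        (σ * ∫ r in Set.Ioi x, (∫ w, Real.exp (-(r ^ p) * w) ∂Q) * r ^ (-α - 1)) := by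
  have hα₀ : 0 < α := hα.1
  have hQ_pos : ∀ᵐ v ∂Q, 0 < v := ae_iff.2 (measure_mono_null (fun v hv => not_lt.1 hv) hQ)
  have hv_integral : ∀ v, 0 < v →
      ∫ r in Ioi 0, (∫ u in Ioo 0 1, ∫ s in Ioo 0 n,
          (if x < min ((α * s / σ) ^ (-1 / α)) (r ^ (1 / p) * u ^ (1 / α) * v ^ (-1 / p))
          then (1 : ℝ) else 0)) * exp (-r)
        = min n (σ / (α * x ^ α)) * (α * x ^ α)
          * ∫ s in Ioi x, exp (-s ^ p * v) * s ^ (-α - 1) := fun v hv => by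
    rw [setIntegral_congr_fun measurableSet_Ioi fun r (hr : 0 < r) => by
        rw [integral_Ioo_Ioo_ite_lt_min hα₀ hσ hn hx hr hv, mul_assoc],
      integral_const_mul, integral_Ioi_max_one_sub_rpow_mul_exp hp hv hα₀ hx]
    ring
  rw [integral_congr_ae (hQ_pos.mono hv_integral), integral_const_mul,
    integral_integral_exp_neg_rpow_mul_swap (hQ_pos.mono fun v hv => hv.le) hx.le
      (integrableOn_Ioi_rpow_of_lt (by linarith) hx),
    min_div_mul_eq_min_mul_div_mul (by positivity) hσ, mul_assoc, mul_assoc]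
end

section
/- For every real s with 0<s<1, the series ∑_{n=1}^∞ ( n^{−s} − (n^{1−s} − (n−1)^{1−s})/(1−s) ) converges and its sum equals ζ(s), the value at s of the analytic continuation of the Riemann zeta function. -/
/-!
The `n`-th term is `(n+1)^{-s} - ∫_n^{n+1} x^{-s} dx`, which the mean value theorem bounds by
`|s| n^{-Re s - 1}` locally uniformly in `s`. Hence the series defines a holomorphic function on
`Re s > 0, s ≠ 1`. For `Re s > 1` its partial sums are those of the Dirichlet series of `ζ` minus
`N^{1-s}/(1-s) → 0`, so it equals `ζ` there, and the identity theorem on the connected punctured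
half-plane extends the equality to `0 < Re s`.
-/

open Complex Set Filter Topology Metric

lemma hasDerivAt_ofReal_cpow_const_of_pos (c : ℂ) {x : ℝ} (hx : 0 < x) :
    HasDerivAt (fun y : ℝ => (y : ℂ) ^ c) (c * (x : ℂ) ^ (c - 1)) x :=
  (hasStrictDerivAt_cpow_const (ofReal_mem_slitPlane.2 hx)).hasDerivAt.comp_ofReal

lemma norm_ofReal_cpow_sub_le {c : ℂ} (hc : c.re ≤ 1) {a x y : ℝ} (ha : 0 < a)
    (hx : a ≤ x) (hy : a ≤ y) :
    ‖(y : ℂ) ^ c - (x : ℂ) ^ c‖ ≤ ‖c‖ * a ^ (c.re - 1) * |y - x| := by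
  have hderiv : ∀ t ∈ Ici a, HasDerivWithinAt (fun y : ℝ => (y : ℂ) ^ c)
      (c * (t : ℂ) ^ (c - 1)) (Ici a) t := fun t ht =>
    (hasDerivAt_ofReal_cpow_const_of_pos c (ha.trans_le ht)).hasDerivWithinAt
  have hbound : ∀ t ∈ Ici a, ‖c * (t : ℂ) ^ (c - 1)‖ ≤ ‖c‖ * a ^ (c.re - 1) := by
    intro t ht
    rw [norm_mul, norm_cpow_eq_rpow_re_of_pos (ha.trans_le ht), sub_re, one_re]
    exact mul_le_mul_of_nonneg_left (Real.rpow_le_rpow_of_nonpos ha ht (by linarith))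
      (norm_nonneg c)
  simpa [← Complex.ofReal_sub] using
    (convex_Ici a).norm_image_sub_le_of_norm_hasDerivWithin_le hderiv hbound hx hy

noncomputable def zetaTerm (n : ℕ) (z : ℂ) : ℂ :=
  ((n : ℂ) + 1) ^ (-z) - (((n : ℂ) + 1) ^ (1 - z) - (n : ℂ) ^ (1 - z)) / (1 - z)

lemma norm_zetaTerm_le {z : ℂ} (hz : -1 ≤ z.re) (hz1 : z ≠ 1) {n : ℕ} (hn : 0 < n) :
    ‖zetaTerm n z‖ ≤ ‖z‖ * (n : ℝ) ^ (-z.re - 1) := by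
  have hz1' : 1 - z ≠ 0 := sub_ne_zero.2 hz1.symm
  have hn' : (0 : ℝ) < n := Nat.cast_pos.2 hn
  set b : ℂ := ((n : ℂ) + 1) ^ (-z)
  set g : ℝ → ℂ := (fun x : ℝ => (x : ℂ) ^ (1 - z) / (1 - z)) - fun x : ℝ => x * b
  have hg : ∀ x ∈ Icc (n : ℝ) (n + 1),
      HasDerivWithinAt g ((x : ℂ) ^ (-z) - b) (Icc (n : ℝ) (n + 1)) x := by
    intro x hx
    have h := ((hasDerivAt_ofReal_cpow_const_of_pos (1 - z) (hn'.trans_le hx.1)).div_const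
      (1 - z)).sub ((hasDerivAt_id x).ofReal_comp.mul_const b)
    rw [mul_div_cancel_left₀ _ hz1', show 1 - z - 1 = -z by ring] at h
    simpa using h.hasDerivWithinAt (s := Icc (n : ℝ) (n + 1))
  have hbound : ∀ x ∈ Icc (n : ℝ) (n + 1),
      ‖(x : ℂ) ^ (-z) - b‖ ≤ ‖z‖ * (n : ℝ) ^ (-z.re - 1) := by
    intro x hx
    have h := norm_ofReal_cpow_sub_le (c := -z) (by rw [neg_re]; linarith) hn' hx.1
      (show (n : ℝ) ≤ n + 1 by linarith)
    rw [norm_sub_rev, norm_neg, neg_re] at h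
    calc _ ≤ ‖z‖ * (n : ℝ) ^ (-z.re - 1) * |(n : ℝ) + 1 - x| := by simpa [b] using h
      _ ≤ ‖z‖ * (n : ℝ) ^ (-z.re - 1) * 1 := by
          gcongr; rw [abs_le]; constructor <;> linarith [hx.1, hx.2]
      _ = _ := mul_one _
  have hmvt := (convex_Icc (n : ℝ) (n + 1)).norm_image_sub_le_of_norm_hasDerivWithin_le hg
    hbound (left_mem_Icc.2 (by linarith)) (right_mem_Icc.2 (by linarith))
  have hterm : zetaTerm n z = g n - g (n + 1) := by
    simp only [zetaTerm, g, b, Pi.sub_apply]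
    push_cast
    field_simp
    ring
  simpa [hterm, norm_sub_rev] using hmvt

lemma differentiableAt_zetaTerm (n : ℕ) {z : ℂ} (hz : z ≠ 1) :
    DifferentiableAt ℂ (zetaTerm n) z := by
  have hn : (n : ℂ) + 1 ≠ 0 := by exact_mod_cast n.succ_ne_zero
  have hz' : 1 - z ≠ 0 := sub_ne_zero.2 hz.symm
  unfold zetaTerm
  refine (differentiableAt_id.neg.const_cpow (.inl hn)).sub (DifferentiableAt.div ?_ ?_ hz')
  · exact ((differentiableAt_id.const_sub 1).const_cpow (.inl hn)).sub
      ((differentiableAt_id.const_sub 1).const_cpow (.inr hz'))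
  · exact differentiableAt_id.const_sub 1

lemma summable_nat_add_one_rpow {p : ℝ} (hp : p < -1) :
    Summable fun n : ℕ => ((n : ℝ) + 1) ^ p := by
  exact_mod_cast (summable_nat_add_iff 1).2 (Real.summable_nat_rpow.2 hp)

lemma summable_zetaTerm {z : ℂ} (hz : 0 < z.re) (hz1 : z ≠ 1) :
    Summable fun n => zetaTerm n z := by
  rw [← summable_nat_add_iff 1]
  refine .of_norm_bounded
    ((summable_nat_add_one_rpow (p := -z.re - 1) (by linarith)).mul_left ‖z‖) fun n => ?_
  exact_mod_cast norm_zetaTerm_le (by linarith) hz1 n.succ_pos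

lemma differentiableOn_tsum_zetaTerm_succ {a : ℝ} (ha : 0 < a) (R : ℝ) :
    DifferentiableOn ℂ (fun z => ∑' n, zetaTerm (n + 1) z)
      (({z | a < z.re} ∩ ball 0 R) \ {1}) := by
  refine differentiableOn_tsum_of_summable_norm
    ((summable_nat_add_one_rpow (p := -a - 1) (by linarith)).mul_left R)
    (fun n z hz => (differentiableAt_zetaTerm _ hz.2).differentiableWithinAt)
    (((isOpen_lt continuous_const continuous_re).inter isOpen_ball).sdiff isClosed_singleton)
    fun n z ⟨⟨(hre : a < z.re), hR⟩, hz1⟩ => ?_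
  have hR : ‖z‖ ≤ R := (mem_ball_zero_iff.1 hR).le
  have hn : (1 : ℝ) ≤ n + 1 := by linarith [n.cast_nonneg (α := ℝ)]
  calc ‖zetaTerm (n + 1) z‖ ≤ ‖z‖ * ((n : ℝ) + 1) ^ (-z.re - 1) := by
        exact_mod_cast norm_zetaTerm_le (by linarith) hz1 n.succ_pos
    _ ≤ R * ((n : ℝ) + 1) ^ (-a - 1) :=
        mul_le_mul hR (Real.rpow_le_rpow_of_exponent_le hn (by linarith)) (by positivity)
          ((norm_nonneg z).trans hR)

lemma isPreconnected_re_pos_diff_one : IsPreconnected ({z : ℂ | 0 < z.re} \ {1}) := by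
  have hpos := convex_halfSpace_re_gt (0 : ℝ)
  have hstrip := (hpos.inter (convex_halfSpace_re_lt 1)).isPreconnected
  have hupper := (hpos.inter (convex_halfSpace_im_gt 0)).isPreconnected
  have hlower := (hpos.inter (convex_halfSpace_im_lt 0)).isPreconnected
  have hright := (convex_halfSpace_re_gt 1).isPreconnected
  have h := ((hstrip.union ⟨1 / 2, 1⟩ (by norm_num) (by norm_num) hupper).union ⟨1 / 2, -1⟩
    (by norm_num) (by norm_num) hlower).union ⟨2, 1⟩ (by norm_num) (by norm_num) hright
  convert h using 1
  ext z
  simp only [Set.mem_sdiff, mem_ofPred_eq, mem_singleton_iff, mem_union, mem_inter_iff,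
    Complex.ext_iff, one_re, one_im]
  grind

lemma differentiableOn_tsum_zetaTerm :
    DifferentiableOn ℂ (fun z => ∑' n, zetaTerm n z) ({z | 0 < z.re} \ {1}) := by
  rintro z₀ ⟨hz₀ : 0 < z₀.re, hz₀1⟩
  set V : Set ℂ := ({z | z₀.re / 2 < z.re} ∩ ball 0 (‖z₀‖ + 1)) \ {1}
  have hV : IsOpen V :=
    ((isOpen_lt continuous_const continuous_re).inter isOpen_ball).sdiff isClosed_singleton
  have hz₀V : z₀ ∈ V := ⟨⟨by simp; linarith, by simp⟩, hz₀1⟩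
  -- The `n = 0` term is unbounded near `1`, so the M-test only applies to the tail.
  have hsplit : EqOn (fun z => ∑' n, zetaTerm n z)
      (fun z => zetaTerm 0 z + ∑' n, zetaTerm (n + 1) z) V :=
    fun z ⟨⟨(hre : z₀.re / 2 < z.re), _⟩, hz1⟩ =>
      (summable_zetaTerm (by linarith) hz1).tsum_eq_zero_add
  have hfirst : DifferentiableOn ℂ (zetaTerm 0) V := fun z hz =>
    (differentiableAt_zetaTerm 0 hz.2).differentiableWithinAt
  have hdiff : DifferentiableOn ℂ (fun z => ∑' n, zetaTerm n z) V :=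
    (hfirst.add (differentiableOn_tsum_zetaTerm_succ (by linarith) _)).congr hsplit
  exact (hdiff.differentiableAt (hV.mem_nhds hz₀V)).differentiableWithinAt

lemma tendsto_natCast_cpow_atTop_zero {w : ℂ} (hw : w.re < 0) :
    Tendsto (fun N : ℕ => (N : ℂ) ^ w) atTop (𝓝 0) := by
  rw [tendsto_zero_iff_norm_tendsto_zero]
  refine ((tendsto_rpow_neg_atTop (neg_pos.2 hw)).comp tendsto_natCast_atTop_atTop).congr'
    ((eventually_gt_atTop 0).mono fun N hN => ?_)
  simp [norm_natCast_cpow_of_pos hN]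

lemma sum_range_zetaTerm {z : ℂ} (hz : z ≠ 1) (N : ℕ) :
    ∑ n ∈ Finset.range N, zetaTerm n z =
      ∑ n ∈ Finset.range N, ((n : ℂ) + 1) ^ (-z) - (N : ℂ) ^ (1 - z) / (1 - z) := by
  have hz' : 1 - z ≠ 0 := sub_ne_zero.2 hz.symm
  have htel := Finset.sum_range_sub (fun n : ℕ => (n : ℂ) ^ (1 - z) / (1 - z)) N
  simp only [Nat.cast_succ, Nat.cast_zero, zero_cpow hz', zero_div, sub_zero, ← sub_div] at htel
  simp only [zetaTerm, Finset.sum_sub_distrib, htel]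

lemma hasSum_zetaTerm_of_one_lt_re {z : ℂ} (hz : 1 < z.re) :
    HasSum (fun n => zetaTerm n z) (riemannZeta z) := by
  have hz1 : z ≠ 1 := by rintro rfl; simp at hz
  have hzeta : HasSum (fun n : ℕ => ((n : ℂ) + 1) ^ (-z)) (riemannZeta z) := by
    have hsum : Summable fun n : ℕ => 1 / ((n : ℂ) + 1) ^ z := by
      exact_mod_cast (summable_nat_add_iff 1).2 (Complex.summable_one_div_nat_cpow.2 hz)
    have h := hsum.hasSum
    rw [← zeta_eq_tsum_one_div_nat_add_one_cpow hz] at h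
    simpa [cpow_neg] using h
  rw [(summable_zetaTerm (by linarith) hz1).hasSum_iff_tendsto_nat]
  simp only [sum_range_zetaTerm hz1]
  simpa using hzeta.tendsto_sum_nat.sub
    ((tendsto_natCast_cpow_atTop_zero (w := 1 - z) (by simp; linarith)).div_const (1 - z))

theorem hasSum_zetaTerm {z : ℂ} (hz : 0 < z.re) (hz1 : z ≠ 1) :
    HasSum (fun n => zetaTerm n z) (riemannZeta z) := by
  set U : Set ℂ := {z | 0 < z.re} \ {1}
  have hU : IsOpen U := (isOpen_lt continuous_const continuous_re).sdiff isClosed_singleton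
  have heq : EqOn (fun z => ∑' n, zetaTerm n z) riemannZeta U := by
    refine (differentiableOn_tsum_zetaTerm.analyticOnNhd hU).eqOn_of_preconnected_of_eventuallyEq
      (analyticOn_riemannZeta.mono fun w hw => hw.2) isPreconnected_re_pos_diff_one
      (z₀ := 2) ⟨by simp, by norm_num⟩ ?_
    filter_upwards [(isOpen_lt continuous_const continuous_re).mem_nhds
      (show (1 : ℝ) < (2 : ℂ).re by norm_num)] with w hw
    exact (hasSum_zetaTerm_of_one_lt_re hw).tsum_eq
  simpa [heq ⟨hz, hz1⟩] using (summable_zetaTerm hz hz1).hasSum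

lemma zetaTerm_ofReal (n : ℕ) (s : ℝ) :
    zetaTerm n s =
      ↑(((n : ℝ) + 1) ^ (-s) - (((n : ℝ) + 1) ^ (1 - s) - (n : ℝ) ^ (1 - s)) / (1 - s)) := by
  have hn : (0 : ℝ) ≤ n + 1 := by positivity
  push_cast [ofReal_cpow hn, ofReal_cpow n.cast_nonneg]
  rfl

/-- For every real `s ∈ (0,1)`, the series
`∑_{n=1}^∞ ( n^{−s} − (n^{1−s} − (n−1)^{1−s})/(1−s) )` converges and its sum equals
`ζ(s)`, the analytic continuation of the Riemann zeta function evaluated at `s`. -/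
theorem zeta_series_representation (s : ℝ) (hs0 : 0 < s) (hs1 : s < 1) :
    ∃ S : ℝ, HasSum (fun n : ℕ =>
        ((n : ℝ) + 1) ^ (-s) -
          (((n : ℝ) + 1) ^ (1 - s) - (n : ℝ) ^ (1 - s)) / (1 - s)) S ∧
      (S : ℂ) = riemannZeta (s : ℂ) := by
  have h := hasSum_zetaTerm (z := s) (by simpa using hs0) (by exact_mod_cast hs1.ne)
  simp only [zetaTerm_ofReal] at h
  exact ⟨_, (summable_ofReal.1 h.summable).hasSum, by rw [ofReal_tsum, h.tsum_eq]⟩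
end

section
/- Let p>0, α∈(1,2) with α<1+p, σ>0, T>0, and let Q̃ be a Borel probability measure on (0,∞) with ∫_{(0,∞)} v^{(α−1)/p} dQ̃(v) < ∞. Then the drift correction of the series representation satisfies ∫_0^∞ ∫_{(0,∞)} ∫_0^∞ ∫_0^1 [ (αs/(σT))^{−1/α} − min( (αs/(σT))^{−1/α} , r^{1/p} u^{1/α} v^{−1/p} ) ] du · e^{−r} dr · dQ̃(v) · ds = (σT/(α−1)) · Γ((1+p−α)/p) · ∫_{(0,∞)} v^{(α−1)/p} dQ̃(v), where Γ is the Gamma function; in particular the left-hand side is finite. -/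
/-!
Move the `s`-integral innermost by Tonelli. For fixed `x > 0`, the integrand
`(c s)^(-1/α) - min ((c s)^(-1/α)) x` is the positive part of `(c s)^(-1/α) - x`, supported on
`s ≤ x^(-α)/c`, and its integral is `x^(1-α) / (c (α-1))`. With `x = r^(1/p) u^(1/α) v^(-1/p)`
this factorises as `v^((α-1)/p) · r^((1-α)/p) · u^((1-α)/α)`: the `u`-integral over `(0,1)`
contributes `α`, the `r`-integral against `e^(-r)` contributes `Γ((1+p-α)/p)`, and the remaining
`v`-integral is the moment of `Q`.
-/
open MeasureTheory Set
open scoped ENNReal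

lemma ENNReal.ofReal_sub_min_self (a b : ℝ) :
    ENNReal.ofReal (a - min a b) = ENNReal.ofReal (a - b) := by
  rcases le_total a b with h | h
  · rw [min_eq_left h, sub_self, ENNReal.ofReal_zero, ENNReal.ofReal_of_nonpos (sub_nonpos.2 h)]
  · rw [min_eq_right h]

section Threshold

variable {α c x s : ℝ}

lemma le_mul_rpow_neg_one_div_iff (hα : 0 < α) (hc : 0 < c) (hx : 0 < x) (hs : 0 < s) :
    x ≤ (c * s) ^ (-1 / α) ↔ s ≤ x ^ (-α) / c := by
  rw [show -1 / α = (-α)⁻¹ by rw [neg_div, one_div, inv_neg],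
    Real.le_rpow_inv_iff_of_neg hx (by positivity) (neg_lt_zero.2 hα), le_div_iff₀' hc]

lemma neg_one_lt_neg_one_div (hα : 1 < α) : -1 < -1 / α := by
  rw [neg_div, neg_lt_neg_iff, div_lt_one (by linarith)]
  exact hα

lemma intervalIntegrable_mul_rpow_neg_one_div (hα : 1 < α) (hc : c ≠ 0) (b : ℝ) :
    IntervalIntegrable (fun s => (c * s) ^ (-1 / α)) volume 0 b := by
  simpa [hc] using (intervalIntegral.intervalIntegrable_rpow' (a := 0) (b := c * b)
    (neg_one_lt_neg_one_div hα)).comp_mul_left (c := c)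

lemma integral_mul_rpow_neg_one_div_sub (hα : 1 < α) (hc : 0 < c) (hx : 0 < x) :
    ∫ s in (0)..x ^ (-α) / c, ((c * s) ^ (-1 / α) - x) = x ^ (1 - α) / (c * (α - 1)) := by
  have hexp : -1 / α + 1 = (α - 1) / α := by field_simp; ring
  rw [intervalIntegral.integral_sub (intervalIntegrable_mul_rpow_neg_one_div hα hc.ne' _)
      intervalIntegrable_const,
    intervalIntegral.integral_comp_mul_left (fun t => t ^ (-1 / α)) hc.ne', mul_zero,
    mul_div_cancel₀ _ hc.ne', integral_rpow (Or.inl (neg_one_lt_neg_one_div hα)), hexp,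
    Real.zero_rpow (div_pos (sub_pos.2 hα) (by linarith)).ne', sub_zero,
    ← Real.rpow_mul hx.le, intervalIntegral.integral_const, smul_eq_mul, sub_zero]
  rw [show -α * ((α - 1) / α) = -α + 1 by field_simp; ring, smul_eq_mul,
    div_mul_eq_mul_div, ← Real.rpow_add_one hx.ne', show 1 - α = -α + 1 by ring]
  have : α - 1 ≠ 0 := by linarith
  field_simp
  ring

lemma lintegral_Ioi_mul_rpow_neg_one_div_sub_min (hα : 1 < α) (hc : 0 < c) (hx : 0 < x) :
    ∫⁻ s in Ioi 0, ENNReal.ofReal ((c * s) ^ (-1 / α) - min ((c * s) ^ (-1 / α)) x) =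
      ENNReal.ofReal (x ^ (1 - α) / (c * (α - 1))) := by
  set s₀ := x ^ (-α) / c
  have hs₀ : 0 < s₀ := by positivity
  have hle (s : ℝ) (hs : 0 < s) : x ≤ (c * s) ^ (-1 / α) ↔ s ≤ s₀ :=
    le_mul_rpow_neg_one_div_iff (by linarith) hc hx hs
  have htail : ∫⁻ s in Ioi s₀, ENNReal.ofReal ((c * s) ^ (-1 / α) - x) = 0 := by
    refine setLIntegral_eq_zero measurableSet_Ioi fun s hs => ENNReal.ofReal_of_nonpos ?_
    have hs' : 0 < s := hs₀.trans hs
    exact sub_nonpos.2 (not_le.1 (mt (hle s hs').1 (not_le.2 hs))).le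
  simp_rw [ENNReal.ofReal_sub_min_self]
  rw [← Ioc_union_Ioi_eq_Ioi hs₀.le,
    lintegral_union measurableSet_Ioi (Ioc_disjoint_Ioi le_rfl), htail, add_zero,
    ← integral_mul_rpow_neg_one_div_sub hα hc hx,
    intervalIntegral.integral_of_le hs₀.le, ofReal_integral_eq_lintegral_ofReal]
  · exact (intervalIntegrable_iff_integrableOn_Ioc_of_le hs₀.le).1
      ((intervalIntegrable_mul_rpow_neg_one_div hα hc.ne' _).sub intervalIntegrable_const)
  · filter_upwards [ae_restrict_mem measurableSet_Ioc] with s hs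
    exact sub_nonneg.2 ((hle s hs.1).2 hs.2)

end Threshold

lemma lintegral_Ioo_zero_one_ofReal_mul_rpow {A γ : ℝ} (hA : 0 ≤ A) (hγ : -1 < γ) :
    ∫⁻ u in Ioo 0 1, ENNReal.ofReal (A * u ^ γ) = ENNReal.ofReal (A / (γ + 1)) := by
  rw [Measure.restrict_congr_set Ioo_ae_eq_Ioc, ← ofReal_integral_eq_lintegral_ofReal,
    ← intervalIntegral.integral_of_le zero_le_one, intervalIntegral.integral_const_mul,
    integral_rpow (Or.inl hγ), Real.one_rpow, Real.zero_rpow (by linarith), sub_zero, mul_one_div]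
  · exact (intervalIntegrable_iff_integrableOn_Ioc_of_le zero_le_one).1
      ((intervalIntegral.intervalIntegrable_rpow' hγ).const_mul A)
  · filter_upwards [ae_restrict_mem measurableSet_Ioc] with u hu
    exact mul_nonneg hA (Real.rpow_nonneg hu.1.le γ)

lemma lintegral_Ioi_ofReal_mul_rpow_mul_exp_neg {B t : ℝ} (hB : 0 ≤ B) (ht : 0 < t) :
    ∫⁻ r in Ioi 0, ENNReal.ofReal (B * r ^ (t - 1)) * ENNReal.ofReal (Real.exp (-r)) =
      ENNReal.ofReal (B * Real.Gamma t) := by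
  have hmul (r : ℝ) (hr : r ∈ Ioi 0) :
      ENNReal.ofReal (B * r ^ (t - 1)) * ENNReal.ofReal (Real.exp (-r)) =
        ENNReal.ofReal (B * (Real.exp (-r) * r ^ (t - 1))) := by
    rw [← ENNReal.ofReal_mul (mul_nonneg hB (Real.rpow_nonneg (le_of_lt hr) _)), mul_assoc,
      mul_comm (Real.exp _)]
  rw [setLIntegral_congr_fun measurableSet_Ioi hmul, ← ofReal_integral_eq_lintegral_ofReal,
    integral_const_mul, Real.Gamma_eq_integral ht]
  · exact (Real.GammaIntegral_convergent ht).const_mul B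
  · filter_upwards [ae_restrict_mem measurableSet_Ioi] with r hr
    exact mul_nonneg hB (mul_nonneg (Real.exp_nonneg _) (Real.rpow_nonneg (le_of_lt hr) _))

section Slice

variable {p α c v : ℝ}

lemma mul_rpow_one_sub {r u : ℝ} (hp : 0 < p) (hr : 0 < r) (hu : 0 < u) (hv : 0 < v) :
    (r ^ (1 / p) * u ^ (1 / α) * v ^ (-1 / p)) ^ (1 - α) =
      v ^ ((α - 1) / p) * r ^ ((1 + p - α) / p - 1) * u ^ ((1 - α) / α) := by
  rw [Real.mul_rpow (by positivity) (by positivity), Real.mul_rpow (by positivity) (by positivity),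
    ← Real.rpow_mul hr.le, ← Real.rpow_mul hu.le, ← Real.rpow_mul hv.le]
  rw [show (1 + p - α) / p - 1 = 1 / p * (1 - α) by field_simp; ring,
    show (α - 1) / p = -1 / p * (1 - α) by ring, show (1 - α) / α = 1 / α * (1 - α) by ring]
  ring

lemma lintegral_Ioi_lintegral_Ioo_sub_min (hp : 0 < p) (hα : 1 < α) (hc : 0 < c) (hv : 0 < v)
    {r : ℝ} (hr : 0 < r) :
    ∫⁻ s in Ioi 0, ∫⁻ u in Ioo 0 1, ENNReal.ofReal ((c * s) ^ (-1 / α) -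
        min ((c * s) ^ (-1 / α)) (r ^ (1 / p) * u ^ (1 / α) * v ^ (-1 / p))) =
      ENNReal.ofReal (α / (c * (α - 1)) * v ^ ((α - 1) / p) * r ^ ((1 + p - α) / p - 1)) := by
  rw [lintegral_lintegral_swap (by fun_prop)]
  have hs (u : ℝ) (hu : u ∈ Ioo 0 1) :
      ∫⁻ s in Ioi 0, ENNReal.ofReal ((c * s) ^ (-1 / α) -
        min ((c * s) ^ (-1 / α)) (r ^ (1 / p) * u ^ (1 / α) * v ^ (-1 / p))) =
      ENNReal.ofReal (v ^ ((α - 1) / p) * r ^ ((1 + p - α) / p - 1) / (c * (α - 1)) *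
        u ^ ((1 - α) / α)) := by
    rw [lintegral_Ioi_mul_rpow_neg_one_div_sub_min hα hc (by have := hu.1; positivity),
      mul_rpow_one_sub hp hr hu.1 hv, div_mul_eq_mul_div, mul_right_comm]
  have hγ : (1 - α) / α + 1 = 1 / α := by field_simp; ring
  rw [setLIntegral_congr_fun measurableSet_Ioo hs, lintegral_Ioo_zero_one_ofReal_mul_rpow
      (by have := sub_pos.2 hα; positivity) (by rw [lt_div_iff₀ (by linarith)]; linarith),
    hγ, div_div_eq_mul_div, div_one]
  congr 1
  ring

lemma lintegral_drift_correction_slice (hp : 0 < p) (hα : 1 < α) (hαp : α < 1 + p) (hc : 0 < c)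
    (hv : 0 < v) :
    ∫⁻ s in Ioi 0, ∫⁻ r in Ioi 0,
        (∫⁻ u in Ioo 0 1, ENNReal.ofReal ((c * s) ^ (-1 / α) -
          min ((c * s) ^ (-1 / α)) (r ^ (1 / p) * u ^ (1 / α) * v ^ (-1 / p)))) *
        ENNReal.ofReal (Real.exp (-r)) =
      ENNReal.ofReal
        (α / (c * (α - 1)) * Real.Gamma ((1 + p - α) / p) * v ^ ((α - 1) / p)) := by
  have hr (r : ℝ) (hr : r ∈ Ioi 0) :
      ∫⁻ s in Ioi 0, (∫⁻ u in Ioo 0 1, ENNReal.ofReal ((c * s) ^ (-1 / α) -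
        min ((c * s) ^ (-1 / α)) (r ^ (1 / p) * u ^ (1 / α) * v ^ (-1 / p)))) *
        ENNReal.ofReal (Real.exp (-r)) =
      ENNReal.ofReal (α / (c * (α - 1)) * v ^ ((α - 1) / p) * r ^ ((1 + p - α) / p - 1)) *
        ENNReal.ofReal (Real.exp (-r)) := by
    rw [lintegral_mul_const' _ _ ENNReal.ofReal_ne_top,
      lintegral_Ioi_lintegral_Ioo_sub_min hp hα hc hv hr]
  rw [lintegral_lintegral_swap (by fun_prop), setLIntegral_congr_fun measurableSet_Ioi hr,
    lintegral_Ioi_ofReal_mul_rpow_mul_exp_neg (by have := sub_pos.2 hα; positivity)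
      (div_pos (by linarith) hp), mul_right_comm]

end Slice

/-- For `p>0`, `α ∈ (1,2)` with `α < 1+p`, `σ>0`, `T>0` and a Borel
probability measure `Q̃` on `(0,∞)` with `∫ v^{(α−1)/p} dQ̃(v) < ∞`, the drift correction
of the series representation satisfies
`∫_0^∞ ∫_{(0,∞)} ∫_0^∞ ∫_0^1 [ (αs/(σT))^{−1/α} − min((αs/(σT))^{−1/α}, r^{1/p} u^{1/α} v^{−1/p}) ]
  du e^{−r} dr dQ̃(v) ds = (σT/(α−1)) Γ((1+p−α)/p) ∫ v^{(α−1)/p} dQ̃(v)`;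
in particular (the integrand being nonnegative) the left-hand side is finite.
This is expressed via the Lebesgue (lower) integral of the nonnegative integrand. -/
theorem drift_correction_identity (p α σ T : ℝ) (hp : 0 < p) (hα : α ∈ Set.Ioo (1:ℝ) 2)
    (hαp : α < 1 + p) (hσ : 0 < σ) (hT : 0 < T)
    (Q : Measure ℝ) [IsProbabilityMeasure Q] (hQ : Q (Set.Iic 0) = 0)
    (hint : Integrable (fun v : ℝ => v ^ ((α - 1) / p)) Q) :
    (∫⁻ s in Set.Ioi (0:ℝ),
      ∫⁻ v, (∫⁻ r in Set.Ioi (0:ℝ),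
        (∫⁻ u in Set.Ioo (0:ℝ) 1,
          ENNReal.ofReal
            ((α * s / (σ * T)) ^ (-1 / α) -
              min ((α * s / (σ * T)) ^ (-1 / α))
                (r ^ (1 / p) * u ^ (1 / α) * v ^ (-1 / p)))) *
          ENNReal.ofReal (Real.exp (-r))) ∂Q) =
      ENNReal.ofReal
        (σ * T / (α - 1) * Real.Gamma ((1 + p - α) / p) *
          ∫ v, v ^ ((α - 1) / p) ∂Q) := by
  obtain ⟨hα1, -⟩ := hα
  have hc : 0 < α / (σ * T) := div_pos (by linarith) (mul_pos hσ hT)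
  have hconst : α / (α / (σ * T) * (α - 1)) = σ * T / (α - 1) := by field_simp
  have hC : 0 ≤ σ * T / (α - 1) * Real.Gamma ((1 + p - α) / p) :=
    mul_nonneg (div_nonneg (by positivity) (by linarith))
      (Real.Gamma_nonneg_of_nonneg (div_pos (by linarith) hp).le)
  have hQpos : ∀ᵐ v ∂Q, 0 < v := by
    simp only [ae_iff, not_lt]
    exact hQ
  simp_rw [mul_div_right_comm α]
  have hslice : ∀ᵐ v ∂Q, _ := hQpos.mono fun v hv =>
    (lintegral_drift_correction_slice hp hα1 hαp hc hv).trans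
      (by rw [hconst, ENNReal.ofReal_mul hC])
  rw [lintegral_lintegral_swap (by fun_prop), lintegral_congr_ae hslice,
    lintegral_const_mul' _ _ ENNReal.ofReal_ne_top,
    ← ofReal_integral_eq_lintegral_ofReal hint (hQpos.mono fun v hv => Real.rpow_nonneg hv.le _),
    ENNReal.ofReal_mul hC]
end

section
/- Let α∈(0,1), p>0, δ>0, λ>0. For n≥1 define σ_n^2 = ∫_0^∞ z^2 ( 1 − min(nαz^α/δ, 1) ) δ e^{−(λz)^p} z^{−1−α} dz, the variance of the jumps discarded by the truncation of the pTSS Lévy measure. Then σ_n^2 > 0 for every n, and the Asmussen–Rosiński condition holds: for every c>0, (1/σ_n^2) ∫_{ { z>0 : z^2 > c σ_n^2 } } z^2 ( 1 − min(nαz^α/δ, 1) ) δ e^{−(λz)^p} z^{−1−α} dz → 0 as n→∞. -/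
/-!
`M - M_n` vanishes beyond the cutoff `a_n = (δ/(nα))^{1/α}`, which tends to `0`. Where
`nαz^α/δ ≤ 1/2` its density times `z²` is at least a constant times `z^{1-α}`, so
`σ_n² ≥ κ a_n^{2-α}` with `κ > 0` independent of `n`. Hence `cσ_n² ≥ a_n² = a_n^α a_n^{2-α}` as soon
as `δ/(nα) ≤ cκ`, and from then on `{z² > cσ_n²}` misses the support of `M - M_n`: the integrals in
the Asmussen–Rosiński condition are eventually `0`.
-/

open MeasureTheory Filter

/-- The variance `σ_n²` of the jumps discarded by truncating the Lévy measure of the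
`p`-tempered `α`-stable subordinator with scale `δ` and tempering rate `λ` at level `n`. -/
noncomputable def pTSSdiscardedVar (α p δ lam : ℝ) (n : ℕ) : ℝ :=
  ∫ z in Set.Ioi (0:ℝ),
    z ^ 2 * (1 - min ((n : ℝ) * α * z ^ α / δ) 1) *
      (δ * Real.exp (-(lam * z) ^ p) * z ^ (-1 - α))

open Set

noncomputable def pTSSdiscardedIntegrand (α p δ lam : ℝ) (n : ℕ) (z : ℝ) : ℝ :=
  z ^ 2 * (1 - min ((n : ℝ) * α * z ^ α / δ) 1) * (δ * Real.exp (-(lam * z) ^ p) * z ^ (-1 - α))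

noncomputable def pTSScutoff (α δ : ℝ) (n : ℕ) : ℝ := (δ / (n * α)) ^ α⁻¹

section

variable {α p δ lam : ℝ} {n : ℕ} {z : ℝ}

lemma pTSSdiscardedVar_eq_integral :
    pTSSdiscardedVar α p δ lam n = ∫ z in Ioi 0, pTSSdiscardedIntegrand α p δ lam n z :=
  rfl

lemma pTSScutoff_pos (hα : 0 < α) (hδ : 0 < δ) (hn : 0 < n) : 0 < pTSScutoff α δ n := by
  have : (0 : ℝ) < n := Nat.cast_pos.2 hn
  unfold pTSScutoff
  positivity

lemma pTSScutoff_rpow (hα : 0 < α) (hδ : 0 ≤ δ) : pTSScutoff α δ n ^ α = δ / (n * α) :=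
  Real.rpow_inv_rpow (by positivity) hα.ne'

lemma pTSScutoff_le_pTSScutoff_one (hα : 0 < α) (hδ : 0 ≤ δ) (hn : 1 ≤ n) :
    pTSScutoff α δ n ≤ pTSScutoff α δ 1 := by
  have : (1 : ℝ) ≤ n := Nat.one_le_cast.2 hn
  unfold pTSScutoff
  gcongr

lemma natCast_mul_mul_rpow_div_eq (hα : 0 < α) (hδ : 0 < δ) (hn : 0 < n) (hz : 0 ≤ z) :
    n * α * z ^ α / δ = (z / pTSScutoff α δ n) ^ α := by
  have : (0 : ℝ) < n := Nat.cast_pos.2 hn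
  rw [Real.div_rpow hz (pTSScutoff_pos hα hδ hn).le, pTSScutoff_rpow hα hδ.le]
  field_simp

lemma pTSSdiscardedIntegrand_eq (hz : 0 < z) :
    pTSSdiscardedIntegrand α p δ lam n z =
      δ * (1 - min (n * α * z ^ α / δ) 1) * Real.exp (-(lam * z) ^ p) * z ^ (1 - α) := by
  have h : z ^ (1 - α) = z ^ 2 * z ^ (-1 - α) := by
    rw [← Real.rpow_natCast, ← Real.rpow_add hz]
    norm_num
    ring_nf
  rw [pTSSdiscardedIntegrand, h]
  ring

lemma pTSSdiscardedIntegrand_nonneg (hδ : 0 ≤ δ) (hz : 0 < z) :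
    0 ≤ pTSSdiscardedIntegrand α p δ lam n z := by
  rw [pTSSdiscardedIntegrand_eq hz]
  have := sub_nonneg.2 (min_le_right (n * α * z ^ α / δ) 1)
  positivity

lemma pTSSdiscardedIntegrand_le (hα : 0 ≤ α) (hδ : 0 ≤ δ) (hlam : 0 ≤ lam) (hz : 0 < z) :
    pTSSdiscardedIntegrand α p δ lam n z ≤ δ * z ^ (1 - α) := by
  rw [pTSSdiscardedIntegrand_eq hz]
  have hmin : 0 ≤ min (n * α * z ^ α / δ) 1 := le_min (by positivity) zero_le_one
  have hexp : Real.exp (-(lam * z) ^ p) ≤ 1 :=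
    Real.exp_le_one_iff.2 (neg_nonpos.2 (by positivity))
  have hprod : (1 - min (n * α * z ^ α / δ) 1) * Real.exp (-(lam * z) ^ p) ≤ 1 :=
    mul_le_one₀ (by linarith) (Real.exp_nonneg _) hexp
  calc _ = δ * ((1 - min (n * α * z ^ α / δ) 1) * Real.exp (-(lam * z) ^ p)) * z ^ (1 - α) := by
        ring
    _ ≤ δ * 1 * z ^ (1 - α) := by gcongr
    _ = δ * z ^ (1 - α) := by ring

lemma le_pTSSdiscardedIntegrand (hα : 0 ≤ α) (hp : 0 ≤ p) (hδ : 0 < δ) (hlam : 0 ≤ lam) {b : ℝ}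
    (hb : n * α * b ^ α / δ ≤ 1 / 2) (hz : 0 < z) (hzb : z ≤ b) :
    δ / 2 * Real.exp (-(lam * b) ^ p) * z ^ (1 - α) ≤ pTSSdiscardedIntegrand α p δ lam n z := by
  rw [pTSSdiscardedIntegrand_eq hz]
  have hmin : min (n * α * z ^ α / δ) 1 ≤ 1 / 2 :=
    min_le_of_left_le (hb.trans' (by gcongr))
  calc _ = δ * (1 / 2) * Real.exp (-(lam * b) ^ p) * z ^ (1 - α) := by ring
    _ ≤ _ := by
        have h12 : 1 / 2 ≤ 1 - min (n * α * z ^ α / δ) 1 := by linarith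
        gcongr

lemma pTSSdiscardedIntegrand_eq_zero (hα : 0 < α) (hδ : 0 < δ) (hn : 0 < n)
    (hz : pTSScutoff α δ n ≤ z) : pTSSdiscardedIntegrand α p δ lam n z = 0 := by
  have hA := pTSScutoff_pos hα hδ hn
  have h1 : 1 ≤ n * α * z ^ α / δ := by
    rw [natCast_mul_mul_rpow_div_eq hα hδ hn (hA.le.trans hz)]
    exact Real.one_le_rpow ((one_le_div hA).2 hz) hα.le
  rw [pTSSdiscardedIntegrand, min_eq_right h1]
  ring

lemma integrableOn_Ioc_pTSSdiscardedIntegrand (hα₀ : 0 ≤ α) (hα₂ : α < 2) (hδ : 0 ≤ δ)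
    (hlam : 0 ≤ lam) (b : ℝ) :
    IntegrableOn (pTSSdiscardedIntegrand α p δ lam n) (Ioc 0 b) := by
  have hdom : IntegrableOn (fun z : ℝ => δ * z ^ (1 - α)) (Ioc 0 b) :=
    (intervalIntegral.intervalIntegrable_rpow' (by linarith)).1.const_mul δ
  refine hdom.mono' (by unfold pTSSdiscardedIntegrand; fun_prop) ?_
  filter_upwards [ae_restrict_mem measurableSet_Ioc] with z hz
  rw [Real.norm_of_nonneg (pTSSdiscardedIntegrand_nonneg hδ hz.1)]
  exact pTSSdiscardedIntegrand_le hα₀ hδ hlam hz.1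

lemma integrableOn_Ioi_pTSSdiscardedIntegrand (hα₀ : 0 < α) (hα₂ : α < 2) (hδ : 0 < δ)
    (hlam : 0 ≤ lam) (hn : 0 < n) :
    IntegrableOn (pTSSdiscardedIntegrand α p δ lam n) (Ioi 0) := by
  rw [← Ioc_union_Ioi_eq_Ioi (pTSScutoff_pos hα₀ hδ hn).le]
  exact (integrableOn_Ioc_pTSSdiscardedIntegrand hα₀.le hα₂ hδ.le hlam _).union
    (integrableOn_zero.congr_fun
      (fun z hz => (pTSSdiscardedIntegrand_eq_zero hα₀ hδ hn (le_of_lt hz)).symm)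
      measurableSet_Ioi)

lemma le_pTSSdiscardedVar (hα₀ : 0 < α) (hα₂ : α < 2) (hp : 0 ≤ p) (hδ : 0 < δ) (hlam : 0 ≤ lam)
    (hn : 0 < n) {b : ℝ} (hb₀ : 0 ≤ b) (hb : n * α * b ^ α / δ ≤ 1 / 2) :
    δ / 2 * Real.exp (-(lam * b) ^ p) * (b ^ (2 - α) / (2 - α)) ≤ pTSSdiscardedVar α p δ lam n := by
  have hr : -1 < 1 - α := by linarith
  rw [pTSSdiscardedVar_eq_integral]
  calc _ = ∫ z in Ioc 0 b, δ / 2 * Real.exp (-(lam * b) ^ p) * z ^ (1 - α) := by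
        rw [integral_const_mul, ← intervalIntegral.integral_of_le hb₀, integral_rpow (.inl hr),
          Real.zero_rpow (by linarith)]
        ring_nf
    _ ≤ ∫ z in Ioc 0 b, pTSSdiscardedIntegrand α p δ lam n z :=
        setIntegral_mono_on ((intervalIntegral.intervalIntegrable_rpow' hr).1.const_mul _)
          (integrableOn_Ioc_pTSSdiscardedIntegrand hα₀.le hα₂ hδ.le hlam b) measurableSet_Ioc
          fun z hz => le_pTSSdiscardedIntegrand hα₀.le hp hδ hlam hb hz.1 hz.2
    _ ≤ ∫ z in Ioi 0, pTSSdiscardedIntegrand α p δ lam n z :=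
        setIntegral_mono_set (integrableOn_Ioi_pTSSdiscardedIntegrand hα₀ hα₂ hδ hlam hn)
          ((ae_restrict_iff' measurableSet_Ioi).2
            (ae_of_all _ fun z hz => pTSSdiscardedIntegrand_nonneg hδ.le hz))
          Ioc_subset_Ioi_self.eventuallyLE

lemma exists_pos_mul_pTSScutoff_rpow_le_pTSSdiscardedVar (hα₀ : 0 < α) (hα₂ : α < 2)
    (hp : 0 ≤ p) (hδ : 0 < δ) (hlam : 0 ≤ lam) :
    ∃ κ > 0, ∀ n : ℕ, 1 ≤ n → κ * pTSScutoff α δ n ^ (2 - α) ≤ pTSSdiscardedVar α p δ lam n := by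
  set θ : ℝ := 2⁻¹ ^ α⁻¹
  have hθ₀ : 0 < θ := by positivity
  have hθα : θ ^ α = 2⁻¹ := Real.rpow_inv_rpow (by norm_num) hα₀.ne'
  have h2α : 0 < 2 - α := sub_pos.2 hα₂
  refine ⟨δ / 2 * Real.exp (-(lam * (θ * pTSScutoff α δ 1)) ^ p) * (θ ^ (2 - α) / (2 - α)),
    by positivity, fun n hn => ?_⟩
  have hA := pTSScutoff_pos hα₀ hδ hn
  have hA₁ := pTSScutoff_le_pTSScutoff_one hα₀ hδ.le hn
  have hb : n * α * (θ * pTSScutoff α δ n) ^ α / δ ≤ 1 / 2 := by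
    have : (0 : ℝ) < n := Nat.cast_pos.2 hn
    rw [Real.mul_rpow hθ₀.le hA.le, hθα, pTSScutoff_rpow hα₀ hδ.le]
    exact le_of_eq (by field_simp)
  calc _ = δ / 2 * Real.exp (-(lam * (θ * pTSScutoff α δ 1)) ^ p) *
        ((θ * pTSScutoff α δ n) ^ (2 - α) / (2 - α)) := by
        rw [Real.mul_rpow hθ₀.le hA.le]
        ring
    _ ≤ δ / 2 * Real.exp (-(lam * (θ * pTSScutoff α δ n)) ^ p) *
        ((θ * pTSScutoff α δ n) ^ (2 - α) / (2 - α)) := by gcongr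
    _ ≤ _ := le_pTSSdiscardedVar hα₀ hα₂ hp hδ hlam hn (by positivity) hb

lemma pTSSdiscardedVar_pos (hα₀ : 0 < α) (hα₂ : α < 2) (hp : 0 ≤ p) (hδ : 0 < δ)
    (hlam : 0 ≤ lam) (hn : 1 ≤ n) : 0 < pTSSdiscardedVar α p δ lam n := by
  obtain ⟨κ, hκ, hlow⟩ := exists_pos_mul_pTSScutoff_rpow_le_pTSSdiscardedVar hα₀ hα₂ hp hδ hlam
  exact (mul_pos hκ (Real.rpow_pos_of_pos (pTSScutoff_pos hα₀ hδ hn) _)).trans_le (hlow n hn)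

lemma eventually_pTSScutoff_sq_le_mul_pTSSdiscardedVar (hα₀ : 0 < α) (hα₂ : α < 2) (hp : 0 ≤ p)
    (hδ : 0 < δ) (hlam : 0 ≤ lam) {c : ℝ} (hc : 0 < c) :
    ∀ᶠ n : ℕ in atTop, pTSScutoff α δ n ^ 2 ≤ c * pTSSdiscardedVar α p δ lam n := by
  obtain ⟨κ, hκ, hlow⟩ := exists_pos_mul_pTSScutoff_rpow_le_pTSSdiscardedVar hα₀ hα₂ hp hδ hlam
  have hsmall : ∀ᶠ n : ℕ in atTop, δ / α / n ≤ c * κ :=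
    (tendsto_const_div_atTop_nhds_zero_nat (δ / α)).eventually_le_const (by positivity)
  filter_upwards [hsmall, eventually_ge_atTop 1] with n hsmall hn
  have hA := pTSScutoff_pos hα₀ hδ hn
  calc pTSScutoff α δ n ^ 2 = pTSScutoff α δ n ^ α * pTSScutoff α δ n ^ (2 - α) := by
        rw [← Real.rpow_add hA, ← Real.rpow_natCast]
        norm_num
    _ ≤ c * κ * pTSScutoff α δ n ^ (2 - α) := by
        rw [pTSScutoff_rpow hα₀ hδ.le, mul_comm (n : ℝ), ← div_div]
        gcongr
    _ ≤ c * pTSSdiscardedVar α p δ lam n := by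
        rw [mul_assoc]
        gcongr
        exact hlow n hn

lemma setIntegral_pTSSdiscardedIntegrand_eq_zero (hα : 0 < α) (hδ : 0 < δ) (hn : 0 < n) {s : ℝ}
    (hs : pTSScutoff α δ n ^ 2 ≤ s) :
    ∫ z in {z : ℝ | 0 < z ∧ s < z ^ 2}, pTSSdiscardedIntegrand α p δ lam n z = 0 :=
  setIntegral_eq_zero_of_forall_eq_zero fun _ hz => pTSSdiscardedIntegrand_eq_zero hα hδ hn
    (lt_of_pow_lt_pow_left₀ 2 hz.1.le (hs.trans_lt hz.2)).le

end

/-- For the pTSS with `α ∈ (0,1)`, `p>0`, `δ>0`, `λ>0`, the discarded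
variance `σ_n²` is strictly positive for every `n ≥ 1`, and the Asmussen–Rosiński
condition holds: for every `c > 0`,
`(1/σ_n²) ∫_{z>0, z² > cσ_n²} z² (1 − min(nαz^α/δ,1)) δ e^{−(λz)^p} z^{−1−α} dz → 0`
as `n → ∞`. -/
theorem pTSS_asmussen_rosinski (α p δ lam : ℝ) (hα : α ∈ Set.Ioo (0:ℝ) 1) (hp : 0 < p)
    (hδ : 0 < δ) (hlam : 0 < lam) :
    (∀ n : ℕ, 1 ≤ n → 0 < pTSSdiscardedVar α p δ lam n) ∧
      ∀ c : ℝ, 0 < c →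
        Tendsto (fun n : ℕ =>
            (1 / pTSSdiscardedVar α p δ lam n) *
              ∫ z in {z : ℝ | 0 < z ∧ c * pTSSdiscardedVar α p δ lam n < z ^ 2},
                z ^ 2 * (1 - min ((n : ℝ) * α * z ^ α / δ) 1) *
                  (δ * Real.exp (-(lam * z) ^ p) * z ^ (-1 - α)))
          atTop (nhds 0) := by
  obtain ⟨hα₀, hα₁⟩ := hα
  have hα₂ : α < 2 := hα₁.trans one_lt_two
  refine ⟨fun n hn => pTSSdiscardedVar_pos hα₀ hα₂ hp.le hδ hlam.le hn, fun c hc => ?_⟩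
  refine tendsto_const_nhds.congr' ?_
  filter_upwards [eventually_pTSScutoff_sq_le_mul_pTSSdiscardedVar hα₀ hα₂ hp.le hδ hlam.le hc,
    eventually_ge_atTop 1] with n hs hn
  have hzero := setIntegral_pTSSdiscardedIntegrand_eq_zero (p := p) (lam := lam) hα₀ hδ hn hs
  unfold pTSSdiscardedIntegrand at hzero
  rw [hzero, mul_zero]
end
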